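/- arXiv:1804.10556 — 2 statements merged into one kernel-verified Lean document; each statement's English description precedes it below -/
import Mathlib

section
/- Let (X, ‖·‖) be a normed space and p ≥ 1. For x = (x_1,...,x_n) and x' = (x_1',...,x_n') in X^n, let μ̂_x and μ̂_{x'} be the empirical measures placing mass 1/n at each x_i and x_i' respectively. Then for any probability measure μ, |W_p(μ̂_x, μ) − W_p(μ̂_{x'}, μ)| ≤ n^{−1/max(2,p)} · (∑_{i=1}^n ‖x_i − x_i'‖²)^{1/2}. In particular, x ↦ W_p(μ̂_x, μ) is n^{−1/max(2,p)}-Lipschitz with respect to the ℓ² product norm on X^n. -/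
open MeasureTheory
open scoped ENNReal

/-- The Wasserstein distance of order `p` on a normed space: the infimum over all
couplings `ξ` of `μ` and `ν` of `(∫ ‖x − y‖^p dξ)^{1/p}`. -/
noncomputable def wassersteinDist {E : Type*} [NormedAddCommGroup E] [MeasurableSpace E]
    (p : ℝ) (μ ν : Measure E) : ℝ :=
  ((⨅ ξ ∈ {ξ : Measure (E × E) | ξ.map Prod.fst = μ ∧ ξ.map Prod.snd = ν},
      ∫⁻ q, ENNReal.ofReal (‖q.1 - q.2‖ ^ p) ∂ξ) ^ (1 / p)).toReal

/-- The empirical measure of an `n`-tuple of points: mass `1/n` at each `x i`. -/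
noncomputable def empiricalMeasure {E : Type*} [MeasurableSpace E] {n : ℕ}
    (x : Fin n → E) : Measure E :=
  (n : ℝ≥0∞)⁻¹ • ∑ i, Measure.dirac (x i)

/-!
Given a coupling `ξ` of `μ̂_{x'}` and `μ`, split the mass that `ξ` puts on each fibre
`{x'ᵢ} × E` equally among the indices `j` with `x'ⱼ = x'ᵢ`. This lifts `ξ` to a measure `γ` on
`Fin n × E` with uniform first marginal. Pushing `γ` forward along `(i, y) ↦ (xᵢ, y)` gives a
coupling of `μ̂_x` and `μ`, and Minkowski's inequality in `L^p(γ)` bounds its cost by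
`(n⁻¹ ∑ ‖xᵢ - x'ᵢ‖^p)^{1/p}` plus the cost of `ξ`. Hence
`W_p(μ̂_x, μ) ≤ (n⁻¹ ∑ ‖xᵢ - x'ᵢ‖^p)^{1/p} + W_p(μ̂_{x'}, μ)`, and symmetrically. The power-mean
inequality (for `p ≤ 2`) or the comparison of the `ℓ^p` and `ℓ²` norms (for `p ≥ 2`) bounds the
first term by `n^{-1/max(2,p)} (∑ ‖xᵢ - x'ᵢ‖²)^{1/2}`.

The triangle inequality is proved for the `ℝ≥0∞`-valued distance: when no coupling exists both
sides are `∞`, and `wassersteinDist`, a `toReal`, is `0` on both.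
-/

open Finset

section Empirical

variable {E : Type*} [MeasurableSpace E] {n : ℕ}

theorem lintegral_empiricalMeasure [MeasurableSingletonClass E] (x : Fin n → E) (f : E → ℝ≥0∞) :
    ∫⁻ z, f z ∂empiricalMeasure x = (n : ℝ≥0∞)⁻¹ * ∑ i, f (x i) := by
  simp [empiricalMeasure, lintegral_finsetSum_measure]

theorem empiricalMeasure_singleton [MeasurableSingletonClass E] [DecidableEq E] (x : Fin n → E)
    (z : E) :
    empiricalMeasure x {z} = (n : ℝ≥0∞)⁻¹ * #{i | x i = z} := by
  simp [empiricalMeasure, Set.indicator, sum_boole]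

theorem ae_empiricalMeasure_mem_range [MeasurableSingletonClass E] (x : Fin n → E) :
    ∀ᵐ z ∂empiricalMeasure x, z ∈ Set.range x := by
  simp [empiricalMeasure]

theorem map_empiricalMeasure {F : Type*} [MeasurableSpace F] (x : Fin n → E) {f : E → F}
    (hf : Measurable f) : (empiricalMeasure x).map f = empiricalMeasure (f ∘ x) := by
  simp [empiricalMeasure, Measure.map_smul, Measure.map_finset_sum' hf.aemeasurable,
    Measure.map_dirac' hf]

end Empirical

theorem sum_smul_restrict_preimage_singleton {α E ι : Type*} [MeasurableSpace α] [MeasurableSpace E]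
    [MeasurableSingletonClass E] [DecidableEq E] [Fintype ι] {ν : Measure α} {π : α → E}
    (hπ : Measurable π) (x : ι → E) (h : ∀ᵐ a ∂ν, π a ∈ Set.range x) :
    ∑ i, (#{j | x j = x i} : ℝ≥0∞)⁻¹ • ν.restrict (π ⁻¹' {x i}) = ν := by
  rw [sum_comp (fun z => (#{j | x j = z} : ℝ≥0∞)⁻¹ • ν.restrict (π ⁻¹' {z}))]
  have hfibre : ∀ z ∈ univ.image x,
      #{j | x j = z} • ((#{j | x j = z} : ℝ≥0∞)⁻¹ • ν.restrict (π ⁻¹' {z})) =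
        ν.restrict (π ⁻¹' {z}) := by
    intro z hz
    have hcard : (#{j | x j = z} : ℝ≥0∞) ≠ 0 := by
      obtain ⟨i, -, rfl⟩ := mem_image.1 hz
      simp
    rw [← Nat.cast_smul_eq_nsmul ℝ≥0∞, smul_smul,
      ENNReal.mul_inv_cancel hcard (ENNReal.natCast_ne_top _), one_smul]
  rw [sum_congr rfl hfibre, ← Measure.sum_coe_finset,
    ← Measure.restrict_biUnion_finset (s := fun z => π ⁻¹' {z})]
  · refine Measure.restrict_eq_self_of_ae_mem (h.mono fun a ha => ?_)
    simpa [eq_comm] using ha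
  · exact fun z _ w _ hzw => Disjoint.preimage π (Set.disjoint_singleton.2 hzw)
  · exact fun z => hπ (measurableSet_singleton z)

section Lift

variable {E : Type*} [MeasurableSpace E] [MeasurableSingletonClass E] {n : ℕ}

theorem exists_lift_of_map_fst_eq_empiricalMeasure {x : Fin n → E} {ξ : Measure (E × E)}
    (hξ : ξ.map Prod.fst = empiricalMeasure x) :
    ∃ γ : Measure (Fin n × E), γ.map Prod.fst = empiricalMeasure id ∧
      γ.map Prod.snd = ξ.map Prod.snd ∧
      ∀ f : E → E → ℝ≥0∞, (∀ z, Measurable (f z)) →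
        ∫⁻ q, f (x q.1) q.2 ∂γ = ∫⁻ q, f q.1 q.2 ∂ξ := by
  classical
  set c : Fin n → ℝ≥0∞ := fun i => #{j | x j = x i}
  set ξi : Fin n → Measure (E × E) := fun i => (c i)⁻¹ • ξ.restrict (Prod.fst ⁻¹' {x i})
  have hsum : ∑ i, ξi i = ξ := sum_smul_restrict_preimage_singleton measurable_fst x
    (ae_of_ae_map measurable_fst.aemeasurable (hξ ▸ ae_empiricalMeasure_mem_range x))
  have hmass : ∀ i, ξi i Set.univ = (n : ℝ≥0∞)⁻¹ := by
    intro i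
    have hc : c i ≠ 0 := by simp [c]
    rw [Measure.smul_apply, Measure.restrict_apply_univ, ← Measure.map_apply measurable_fst
      (measurableSet_singleton _), hξ, empiricalMeasure_singleton, smul_eq_mul, mul_left_comm,
      ENNReal.inv_mul_cancel hc (ENNReal.natCast_ne_top _), mul_one]
  have hfst : ∀ i, ∀ᵐ q ∂ξi i, q.1 = x i := fun i =>
    Measure.ae_smul_measure (ae_restrict_mem (measurable_fst (measurableSet_singleton _))) _
  have hφ : ∀ i : Fin n, Measurable fun q : E × E => (i, q.2) := fun _ =>
    measurable_prodMk_left.comp measurable_snd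
  refine ⟨∑ i, (ξi i).map (fun q => (i, q.2)), ?_, ?_, fun f hf => ?_⟩
  · rw [Measure.map_finset_sum' measurable_fst.aemeasurable]
    simp_rw [Measure.map_map measurable_fst (hφ _)]
    simp [Function.comp_def, Measure.map_const, hmass, empiricalMeasure, smul_sum]
  · conv_rhs => rw [← hsum, Measure.map_finset_sum' measurable_snd.aemeasurable]
    rw [Measure.map_finset_sum' measurable_snd.aemeasurable]
    simp_rw [Measure.map_map measurable_snd (hφ _)]
    rfl
  · conv_rhs => rw [← hsum, lintegral_finsetSum_measure]
    rw [lintegral_finsetSum_measure]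
    refine sum_congr rfl fun i _ => ?_
    rw [lintegral_map (measurable_from_prod_countable_right fun i => hf (x i)) (hφ i)]
    exact lintegral_congr_ae ((hfst i).mono fun q hq => by simp [hq])

end Lift

section Transport

variable {E : Type*} [PseudoEMetricSpace E] [MeasurableSpace E] [OpensMeasurableSpace E]
  [MeasurableSingletonClass E] {n : ℕ}

theorem exists_coupling_empiricalMeasure_le {p : ℝ} (hp : 1 ≤ p) (x x' : Fin n → E)
    {ν : Measure E} {ξ : Measure (E × E)} (h₁ : ξ.map Prod.fst = empiricalMeasure x')
    (h₂ : ξ.map Prod.snd = ν) :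
    ∃ ξ' : Measure (E × E), ξ'.map Prod.fst = empiricalMeasure x ∧ ξ'.map Prod.snd = ν ∧
      (∫⁻ q, edist q.1 q.2 ^ p ∂ξ') ^ (1 / p) ≤
        ((n : ℝ≥0∞)⁻¹ * ∑ i, edist (x i) (x' i) ^ p) ^ (1 / p) +
          (∫⁻ q, edist q.1 q.2 ^ p ∂ξ) ^ (1 / p) := by
  obtain ⟨γ, hγ₁, hγ₂, hγ⟩ := exists_lift_of_map_fst_eq_empiricalMeasure h₁
  have hx : Measurable x := measurable_of_finite x
  have hψ : Measurable fun q : Fin n × E => (x q.1, q.2) :=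
    (hx.comp measurable_fst).prodMk measurable_snd
  have hp₀ : 0 ≤ 1 / p := by positivity
  refine ⟨γ.map fun q => (x q.1, q.2), ?_, ?_, ?_⟩
  · rw [Measure.map_map measurable_fst hψ]
    change γ.map (x ∘ Prod.fst) = _
    rw [← Measure.map_map hx measurable_fst, hγ₁, map_empiricalMeasure _ hx]
    rfl
  · rw [Measure.map_map measurable_snd hψ, ← h₂, ← hγ₂]
    rfl
  · have hedist : ∀ z : E, Measurable fun y => edist z y := fun z =>
      (continuous_const.edist continuous_id).measurable
    -- `edist` need not be measurable for the product σ-algebra on `E × E`, hence only `≤` here.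
    calc (∫⁻ q, edist q.1 q.2 ^ p ∂γ.map fun q => (x q.1, q.2)) ^ (1 / p)
        ≤ (∫⁻ q, edist (x q.1) q.2 ^ p ∂γ) ^ (1 / p) :=
          ENNReal.rpow_le_rpow (lintegral_map_le _ _) hp₀
      _ ≤ (∫⁻ q, (edist (x q.1) (x' q.1) + edist (x' q.1) q.2) ^ p ∂γ) ^ (1 / p) := by
          gcongr with q
          exact edist_triangle _ _ _
      _ ≤ (∫⁻ q, edist (x q.1) (x' q.1) ^ p ∂γ) ^ (1 / p) +
            (∫⁻ q, edist (x' q.1) q.2 ^ p ∂γ) ^ (1 / p) :=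
          ENNReal.lintegral_Lp_add_le
            ((measurable_of_finite fun i => edist (x i) (x' i)).comp measurable_fst).aemeasurable
            (measurable_from_prod_countable_right fun i => hedist (x' i)).aemeasurable hp
      _ = _ := by
          rw [hγ _ fun z => (hedist z).pow_const p,
            ← lintegral_map (f := fun i => edist (x i) (x' i) ^ p) (measurable_of_finite _)
              measurable_fst, hγ₁, lintegral_empiricalMeasure]
          rfl

end Transport

section Wasserstein

variable {E : Type*} [PseudoEMetricSpace E] [MeasurableSpace E]

noncomputable def wassersteinEDist (p : ℝ) (μ ν : Measure E) : ℝ≥0∞ :=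
  (⨅ ξ ∈ {ξ : Measure (E × E) | ξ.map Prod.fst = μ ∧ ξ.map Prod.snd = ν},
    ∫⁻ q, edist q.1 q.2 ^ p ∂ξ) ^ (1 / p)

theorem wassersteinEDist_eq_iInf {p : ℝ} (hp : 0 < p) (μ ν : Measure E) :
    wassersteinEDist p μ ν =
      ⨅ ξ ∈ {ξ : Measure (E × E) | ξ.map Prod.fst = μ ∧ ξ.map Prod.snd = ν},
        (∫⁻ q, edist q.1 q.2 ^ p ∂ξ) ^ (1 / p) :=
  let f := ENNReal.orderIsoRpow (1 / p) (by positivity)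
  (f.map_iInf _).trans (iInf_congr fun _ => f.map_iInf _)

theorem wassersteinEDist_empiricalMeasure_le [OpensMeasurableSpace E]
    [MeasurableSingletonClass E] {p : ℝ} (hp : 1 ≤ p) {n : ℕ} (x x' : Fin n → E) (ν : Measure E) :
    wassersteinEDist p (empiricalMeasure x) ν ≤
      ((n : ℝ≥0∞)⁻¹ * ∑ i, edist (x i) (x' i) ^ p) ^ (1 / p) +
        wassersteinEDist p (empiricalMeasure x') ν := by
  rw [wassersteinEDist_eq_iInf (by linarith), wassersteinEDist_eq_iInf (by linarith),
    ENNReal.add_iInf₂]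
  refine le_iInf₂ fun ξ hξ => ?_
  obtain ⟨ξ', h₁, h₂, hle⟩ := exists_coupling_empiricalMeasure_le hp x x' hξ.1 hξ.2
  exact (iInf₂_le ξ' ⟨h₁, h₂⟩).trans hle

end Wasserstein

section Normed

variable {E : Type*} [NormedAddCommGroup E]

theorem wassersteinDist_eq_toReal_wassersteinEDist [MeasurableSpace E] {p : ℝ} (hp : 0 ≤ p)
    (μ ν : Measure E) : wassersteinDist p μ ν = (wassersteinEDist p μ ν).toReal := by
  simp_rw [wassersteinDist, wassersteinEDist,
    ← ENNReal.ofReal_rpow_of_nonneg (norm_nonneg _) hp, ← dist_eq_norm, edist_dist]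

theorem toReal_mean_edist_rpow {p : ℝ} {n : ℕ} (hp : 0 ≤ p) (x x' : Fin n → E) :
    (((n : ℝ≥0∞)⁻¹ * ∑ i, edist (x i) (x' i) ^ p) ^ (1 / p)).toReal =
      ((n : ℝ)⁻¹ * ∑ i, ‖x i - x' i‖ ^ p) ^ (1 / p) := by
  have hterm : ∀ i ∈ univ, edist (x i) (x' i) ^ p ≠ ⊤ := fun i _ =>
    ENNReal.rpow_ne_top_of_nonneg hp (edist_ne_top _ _)
  rw [← ENNReal.toReal_rpow, ENNReal.toReal_mul, ENNReal.toReal_sum hterm]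
  simp [← ENNReal.toReal_rpow, edist_dist, dist_eq_norm]

end Normed

theorem ENNReal.abs_toReal_sub_toReal_le {a b d : ℝ≥0∞} (hd : d ≠ ⊤) (hab : a ≤ d + b)
    (hba : b ≤ d + a) : |a.toReal - b.toReal| ≤ d.toReal := by
  rcases eq_or_ne a ⊤ with rfl | ha
  · have hb : b = ⊤ := by simpa [hd] using hab
    simp [hb]
  have hb : b ≠ ⊤ := ne_top_of_le_ne_top (ENNReal.add_ne_top.2 ⟨hd, ha⟩) hba
  have h₁ := ENNReal.toReal_mono (ENNReal.add_ne_top.2 ⟨hd, hb⟩) hab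
  have h₂ := ENNReal.toReal_mono (ENNReal.add_ne_top.2 ⟨hd, ha⟩) hba
  rw [ENNReal.toReal_add hd hb] at h₁
  rw [ENNReal.toReal_add hd ha] at h₂
  exact abs_sub_le_iff.2 ⟨by linarith, by linarith⟩

section MeanInequalities

variable {ι : Type*} [Fintype ι]

theorem Real.sum_rpow_le_rpow_sum {q : ℝ} (hq : 1 ≤ q) (b : ι → ℝ) (hb : ∀ i, 0 ≤ b i) :
    ∑ i, b i ^ q ≤ (∑ i, b i) ^ q := by
  set S := ∑ i, b i
  have hS : 0 ≤ S := sum_nonneg fun i _ => hb i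
  have hq' : (1 : ℝ) + (q - 1) ≠ 0 := by linarith
  calc ∑ i, b i ^ q = ∑ i, b i * b i ^ (q - 1) := by
        refine sum_congr rfl fun i _ => ?_
        rw [← Real.rpow_one_add' (hb i) hq', add_sub_cancel]
    _ ≤ ∑ i, b i * S ^ (q - 1) := by
        refine sum_le_sum fun i _ => mul_le_mul_of_nonneg_left ?_ (hb i)
        exact Real.rpow_le_rpow (hb i) (single_le_sum (fun j _ => hb j) (mem_univ i)) (by linarith)
    _ = S ^ q := by
        rw [← sum_mul, ← Real.rpow_one_add' hS hq', add_sub_cancel]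

theorem Real.rpow_sum_rpow_le_sqrt_sum_sq {p : ℝ} (hp : 2 ≤ p) (a : ι → ℝ) (ha : ∀ i, 0 ≤ a i) :
    (∑ i, a i ^ p) ^ (1 / p) ≤ √(∑ i, a i ^ 2) := by
  have hp₀ : 0 < p := by linarith
  have hS : 0 ≤ ∑ i, a i ^ 2 := sum_nonneg fun i _ => sq_nonneg (a i)
  have key : ∑ i, a i ^ p ≤ (∑ i, a i ^ 2) ^ (p / 2) := by
    convert Real.sum_rpow_le_rpow_sum (q := p / 2) (by linarith) (fun i => a i ^ 2)
      (fun i => sq_nonneg (a i)) using 2 with i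
    rw [← Real.rpow_natCast, ← Real.rpow_mul (ha i)]
    ring_nf
  calc (∑ i, a i ^ p) ^ (1 / p) ≤ ((∑ i, a i ^ 2) ^ (p / 2)) ^ (1 / p) :=
        Real.rpow_le_rpow (sum_nonneg fun i _ => Real.rpow_nonneg (ha i) _) key (by positivity)
    _ = √(∑ i, a i ^ 2) := by
        rw [← Real.rpow_mul hS, Real.sqrt_eq_rpow]
        field_simp

theorem Real.rpow_mean_rpow_le_sqrt_mean_sq [Nonempty ι] {p : ℝ} (hp₀ : 0 < p) (hp : p ≤ 2)
    (a : ι → ℝ) (ha : ∀ i, 0 ≤ a i) :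
    ((Fintype.card ι : ℝ)⁻¹ * ∑ i, a i ^ p) ^ (1 / p) ≤
      √((Fintype.card ι : ℝ)⁻¹ * ∑ i, a i ^ 2) := by
  set w : ℝ := (Fintype.card ι : ℝ)⁻¹
  have hw : 0 ≤ w := by positivity
  have hM : 0 ≤ w * ∑ i, a i ^ p :=
    mul_nonneg hw (sum_nonneg fun i _ => Real.rpow_nonneg (ha i) _)
  have key : (w * ∑ i, a i ^ p) ^ (2 / p) ≤ w * ∑ i, a i ^ 2 := by
    have := Real.rpow_arith_mean_le_arith_mean_rpow univ (fun _ => w) (fun i => a i ^ p)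
      (fun _ _ => hw) (by simp [w]) (fun i _ => Real.rpow_nonneg (ha i) _)
      (p := 2 / p) (by rw [le_div_iff₀ hp₀]; linarith)
    convert this using 1
    · rw [mul_sum]
    · rw [mul_sum]
      refine sum_congr rfl fun i _ => ?_
      rw [← Real.rpow_mul (ha i), mul_div_cancel₀ _ hp₀.ne', Real.rpow_two]
  calc (w * ∑ i, a i ^ p) ^ (1 / p) = √((w * ∑ i, a i ^ p) ^ (2 / p)) := by
        rw [Real.sqrt_eq_rpow, ← Real.rpow_mul hM]
        ring_nf
    _ ≤ √(w * ∑ i, a i ^ 2) := Real.sqrt_le_sqrt key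

theorem Real.rpow_mean_rpow_le_card_rpow_mul_sqrt_sum_sq [Nonempty ι] {p : ℝ} (hp : 0 < p)
    (a : ι → ℝ) (ha : ∀ i, 0 ≤ a i) :
    ((Fintype.card ι : ℝ)⁻¹ * ∑ i, a i ^ p) ^ (1 / p) ≤
      (Fintype.card ι : ℝ) ^ (-(1 / max 2 p)) * √(∑ i, a i ^ 2) := by
  have hN : (0 : ℝ) ≤ Fintype.card ι := Nat.cast_nonneg _
  rcases le_total p 2 with hp2 | hp2
  · rw [max_eq_left hp2, Real.rpow_neg hN, ← Real.inv_rpow hN, ← Real.sqrt_eq_rpow,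
      ← Real.sqrt_mul (inv_nonneg.2 hN)]
    exact Real.rpow_mean_rpow_le_sqrt_mean_sq hp hp2 a ha
  · rw [max_eq_right hp2, Real.rpow_neg hN, ← Real.inv_rpow hN,
      Real.mul_rpow (inv_nonneg.2 hN) (sum_nonneg fun i _ => Real.rpow_nonneg (ha i) _)]
    gcongr
    exact Real.rpow_sum_rpow_le_sqrt_sum_sq hp2 a ha

end MeanInequalities

theorem wasserstein_empirical_lipschitz_general
    {E : Type*} [NormedAddCommGroup E] [MeasurableSpace E] [BorelSpace E]
    (p : ℝ) (hp : 1 ≤ p) {n : ℕ} (hn : 0 < n)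
    (x x' : Fin n → E) (μ : Measure E) :
    |wassersteinDist p (empiricalMeasure x) μ - wassersteinDist p (empiricalMeasure x') μ|
      ≤ (n : ℝ) ^ (-(1 / max 2 p)) * Real.sqrt (∑ i, ‖x i - x' i‖ ^ 2) := by
  have : Nonempty (Fin n) := Fin.pos_iff_nonempty.1 hn
  set D := ((n : ℝ≥0∞)⁻¹ * ∑ i, edist (x i) (x' i) ^ p) ^ (1 / p)
  have hD : D ≠ ⊤ :=
    ENNReal.rpow_ne_top_of_nonneg (by positivity) (ENNReal.mul_ne_top (by simp [hn.ne'])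
      (ENNReal.sum_ne_top.2 fun i _ => ENNReal.rpow_ne_top_of_nonneg (by linarith)
        (edist_ne_top _ _)))
  rw [wassersteinDist_eq_toReal_wassersteinEDist (by linarith),
    wassersteinDist_eq_toReal_wassersteinEDist (by linarith)]
  calc _ ≤ D.toReal := ENNReal.abs_toReal_sub_toReal_le hD
          (wassersteinEDist_empiricalMeasure_le hp x x' μ)
          (by simpa only [edist_comm] using wassersteinEDist_empiricalMeasure_le hp x' x μ)
    _ = ((n : ℝ)⁻¹ * ∑ i, ‖x i - x' i‖ ^ p) ^ (1 / p) := toReal_mean_edist_rpow (by linarith) x x'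
    _ ≤ _ := by
      simpa using Real.rpow_mean_rpow_le_card_rpow_mul_sqrt_sum_sq (by linarith)
        (fun i => ‖x i - x' i‖) fun i => norm_nonneg _

/-- Lipschitz property of the empirical Wasserstein distance:
for `n`-tuples `x, x'` in a normed space,
`|W_p(μ̂_x, μ) − W_p(μ̂_{x'}, μ)| ≤ n^{−1/max(2,p)} (∑ ‖x_i − x_i'‖²)^{1/2}`,
i.e. `x ↦ W_p(μ̂_x, μ)` is `n^{−1/max(2,p)}`-Lipschitz for the ℓ² product norm. -/
theorem wasserstein_empirical_lipschitz
    {E : Type*} [NormedAddCommGroup E] [NormedSpace ℝ E] [MeasurableSpace E] [BorelSpace E]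
    (p : ℝ) (hp : 1 ≤ p) {n : ℕ} (hn : 0 < n)
    (x x' : Fin n → E) (μ : Measure E) [IsProbabilityMeasure μ] :
    |wassersteinDist p (empiricalMeasure x) μ - wassersteinDist p (empiricalMeasure x') μ|
      ≤ (n : ℝ) ^ (-(1 / max 2 p)) * Real.sqrt (∑ i, ‖x i - x' i‖ ^ 2) :=
  wasserstein_empirical_lipschitz_general p hp hn x x' μ
end

section
/- Let B_0 = {x ∈ ℓ² : ∑_{m≥1} (γ^{m−1} x_m)² ≤ 1} for a constant γ > 1. Then for every ε ∈ (0,1], the ε-covering number of B_0 (in the ℓ² norm) satisfies log N_ε(B_0) ≥ (log(1/ε))²/(2 log γ). -/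
/-!
Restricting to the first `J = ⌈log(1/ε) / log γ⌉` coordinates turns a covering of `B₀` by `N`
balls of radius `ε` into a covering of the `J`-dimensional ellipsoid with semi-axes `γ^{-m}`,
`m < J`. Comparing volumes gives `N ε^J ≥ ∏_{m<J} γ^{-m}`, i.e.
`log N ≥ ∑_{m<J} (log(1/ε) - m log γ)`, and for this choice of `J` the right-hand side is at
least `log(1/ε)² / (2 log γ)`.
-/

open scoped ENNReal
open Finset MeasureTheory Metric

section Volume

variable {E : Type*} [NormedAddCommGroup E] [NormedSpace ℝ E] [MeasurableSpace E] [BorelSpace E]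
  [FiniteDimensional ℝ E] (μ : Measure E) [μ.IsAddHaarMeasure]

lemma measure_le_card_mul_of_subset_biUnion_closedBall {α : Type*} {K : Set E} {t : Finset α}
    {c : α → E} {ε : ℝ} (hε : 0 ≤ ε) (hK : K ⊆ ⋃ a ∈ t, closedBall (c a) ε) :
    μ K ≤ #t * ENNReal.ofReal (ε ^ Module.finrank ℝ E) * μ (ball 0 1) := calc
  μ K ≤ ∑ a ∈ t, μ (closedBall (c a) ε) := (measure_mono hK).trans (measure_biUnion_finset_le t _)
  _ = _ := by simp [Measure.addHaar_closedBall μ _ hε, mul_assoc]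

end Volume

section EuclideanEllipsoid

variable {ι : Type*} [Fintype ι]

def euclideanEllipsoid (w : ι → ℝ) : Set (EuclideanSpace ℝ ι) :=
  {z | ∑ i, (w i * z i) ^ 2 ≤ 1}

lemma euclideanEllipsoid_eq_preimage [DecidableEq ι] (w : ι → ℝ) :
    euclideanEllipsoid w = Matrix.toLpLin 2 2 (Matrix.diagonal w) ⁻¹' closedBall 0 1 := by
  ext z
  simp [euclideanEllipsoid, EuclideanSpace.norm_eq, Matrix.toLpLin_apply, Matrix.mulVec_diagonal,
    Real.sqrt_le_one, mul_pow]

lemma volume_euclideanEllipsoid {w : ι → ℝ} (hw : ∀ i, w i ≠ 0) :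
    volume (euclideanEllipsoid w)
      = ENNReal.ofReal (∏ i, |w i|)⁻¹ * volume (ball (0 : EuclideanSpace ℝ ι) 1) := by
  classical
  have hdet : LinearMap.det (Matrix.toLpLin 2 2 (Matrix.diagonal w)
      : EuclideanSpace ℝ ι →ₗ[ℝ] EuclideanSpace ℝ ι) = ∏ i, w i := by
    rw [Matrix.toLpLin_eq_toLin, LinearMap.det_toLin, Matrix.det_diagonal]
  rw [euclideanEllipsoid_eq_preimage, Measure.addHaar_preimage_linearMap _
      (by rw [hdet]; exact prod_ne_zero_iff.2 fun i _ => hw i),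
    Measure.addHaar_closedBall _ _ zero_le_one, one_pow, ENNReal.ofReal_one, one_mul, hdet,
    abs_inv, abs_prod]

lemma prod_abs_inv_le_card_mul_pow_of_euclideanEllipsoid_subset {α : Type*} {w : ι → ℝ}
    (hw : ∀ i, w i ≠ 0) {t : Finset α} {c : α → EuclideanSpace ℝ ι} {ε : ℝ} (hε : 0 ≤ ε)
    (h : euclideanEllipsoid w ⊆ ⋃ a ∈ t, closedBall (c a) ε) :
    (∏ i, |w i|)⁻¹ ≤ #t * ε ^ Fintype.card ι := by
  have hvol := measure_le_card_mul_of_subset_biUnion_closedBall volume hε h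
  rw [volume_euclideanEllipsoid hw, finrank_euclideanSpace,
    ENNReal.mul_le_mul_iff_left (measure_ball_pos volume 0 one_pos).ne' measure_ball_lt_top.ne,
    ← ENNReal.ofReal_natCast, ← ENNReal.ofReal_mul (Nat.cast_nonneg _)] at hvol
  exact (ENNReal.ofReal_le_ofReal_iff (by positivity)).1 hvol

end EuclideanEllipsoid

section LpEllipsoid

variable {ι : Type*}

def lpEllipsoid (w : ι → ℝ) : Set (lp (fun _ : ι => ℝ) 2) :=
  {x | ∑' i, ENNReal.ofReal ((w i * x i) ^ 2) ≤ 1}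

namespace lp

def restrict (S : Finset ι) (x : lp (fun _ : ι => ℝ) 2) : EuclideanSpace ℝ S :=
  WithLp.toLp 2 fun i => x i

lemma dist_restrict_le (S : Finset ι) (x y : lp (fun _ : ι => ℝ) 2) :
    dist (restrict S x) (restrict S y) ≤ dist x y := by
  rw [EuclideanSpace.dist_eq, dist_eq_norm, ← Real.sqrt_sq (norm_nonneg (x - y))]
  refine Real.sqrt_le_sqrt ?_
  have h := lp.sum_rpow_le_norm_rpow (by norm_num : (0 : ℝ) < (2 : ℝ≥0∞).toReal) (x - y) S
  simp only [ENNReal.toReal_ofNat, Real.rpow_two, lp.coeFn_sub, Pi.sub_apply, Real.norm_eq_abs,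
    sq_abs] at h
  simpa [restrict, Real.dist_eq, sq_abs, sum_attach S fun i => (x i - y i) ^ 2] using h

variable [DecidableEq ι]

def extend (S : Finset ι) (z : EuclideanSpace ℝ S) : lp (fun _ : ι => ℝ) 2 :=
  ⟨fun i => if h : i ∈ S then z ⟨i, h⟩ else 0,
    (memℓp_zero <| S.finite_toSet.subset fun _ hi => by by_contra h; exact hi (dif_neg h))
      |>.of_exponent_ge (by norm_num)⟩

lemma extend_apply_of_mem (S : Finset ι) (z : EuclideanSpace ℝ S) {i : ι} (hi : i ∈ S) :
    extend S z i = z ⟨i, hi⟩ := dif_pos hi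

lemma extend_apply_of_notMem (S : Finset ι) (z : EuclideanSpace ℝ S) {i : ι} (hi : i ∉ S) :
    extend S z i = 0 := dif_neg hi

@[simp]
lemma restrict_extend (S : Finset ι) (z : EuclideanSpace ℝ S) : restrict S (extend S z) = z := by
  ext i
  exact extend_apply_of_mem S z i.2

lemma extend_mem_lpEllipsoid {w : ι → ℝ} {S : Finset ι} {z : EuclideanSpace ℝ S}
    (hz : z ∈ euclideanEllipsoid fun i : S => w i) : extend S z ∈ lpEllipsoid w := by
  rw [lpEllipsoid, Set.mem_ofPred_eq, tsum_eq_sum (s := S) fun i hi => by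
      simp [extend_apply_of_notMem S z hi],
    ← ENNReal.ofReal_sum_of_nonneg fun _ _ => sq_nonneg _, ← ENNReal.ofReal_one, ← sum_coe_sort S]
  refine ENNReal.ofReal_le_ofReal (le_of_eq_of_le ?_ hz)
  exact sum_congr rfl fun i _ => by rw [extend_apply_of_mem S z i.2]

end lp

lemma euclideanEllipsoid_subset_biUnion_restrict [DecidableEq ι] {w : ι → ℝ} {ε : ℝ}
    {s : Finset (lp (fun _ : ι => ℝ) 2)} (hs : lpEllipsoid w ⊆ ⋃ y ∈ s, closedBall y ε)
    (S : Finset ι) :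
    euclideanEllipsoid (fun i : S => w i) ⊆ ⋃ y ∈ s, closedBall (lp.restrict S y) ε := by
  intro z hz
  obtain ⟨y, hy, hzy⟩ := Set.mem_iUnion₂.1 (hs (lp.extend_mem_lpEllipsoid hz))
  refine Set.mem_iUnion₂.2 ⟨y, hy, ?_⟩
  simpa using (lp.dist_restrict_le S (lp.extend S z) y).trans hzy

lemma sum_log_le_log_card_of_lpEllipsoid_subset {w : ι → ℝ} {ε : ℝ} (hε : 0 < ε)
    {s : Finset (lp (fun _ : ι => ℝ) 2)} (hs : lpEllipsoid w ⊆ ⋃ y ∈ s, closedBall y ε)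
    (S : Finset ι) (hw : ∀ i ∈ S, 0 < w i) :
    ∑ i ∈ S, Real.log (1 / (w i * ε)) ≤ Real.log #s := by
  classical
  have hcover := prod_abs_inv_le_card_mul_pow_of_euclideanEllipsoid_subset
    (fun i : S => (hw i i.2).ne') hε.le (euclideanEllipsoid_subset_biUnion_restrict hs S)
  rw [prod_coe_sort S fun i => |w i|, prod_congr rfl fun i hi => abs_of_pos (hw i hi),
    Fintype.card_coe, ← div_le_iff₀ (by positivity)] at hcover
  have hprod : ∏ i ∈ S, 1 / (w i * ε) = (∏ i ∈ S, w i)⁻¹ / ε ^ #S := by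
    simp [prod_mul_distrib, prod_inv_distrib, div_eq_mul_inv, mul_comm]
  have hpos : ∀ i ∈ S, 0 < 1 / (w i * ε) := fun i hi => by have := hw i hi; positivity
  calc ∑ i ∈ S, Real.log (1 / (w i * ε)) = Real.log (∏ i ∈ S, 1 / (w i * ε)) :=
        (Real.log_prod fun i hi => (hpos i hi).ne').symm
    _ ≤ Real.log #s := Real.log_le_log (prod_pos hpos) (hprod ▸ hcover)

end LpEllipsoid

lemma sum_range_natCast (n : ℕ) : ∑ i ∈ range n, (i : ℝ) = n * (n - 1) / 2 := by
  induction n with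
  | zero => simp
  | succ n ih => rw [sum_range_succ, ih]; push_cast; ring

lemma sq_div_two_mul_le_sum_range_ceil {L t : ℝ} (hL : 0 ≤ L) (ht : 0 < t) :
    L ^ 2 / (2 * t) ≤ ∑ m ∈ range ⌈L / t⌉₊, (L - m * t) := by
  set J := ⌈L / t⌉₊
  have hJ₁ : L / t ≤ J := Nat.le_ceil _
  have hJ₂ : (J : ℝ) < L / t + 1 := Nat.ceil_lt_add_one (div_nonneg hL ht.le)
  obtain ⟨a, rfl⟩ : ∃ a, L = a * t := ⟨L / t, (div_mul_cancel₀ L ht.ne').symm⟩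
  rw [mul_div_cancel_right₀ a ht.ne'] at hJ₁ hJ₂
  rw [sum_sub_distrib, sum_const, card_range, nsmul_eq_mul, ← sum_mul, sum_range_natCast,
    div_le_iff₀ (by positivity)]
  -- the gap over `a² / 2` is `(J - (J - a)²) / 2`, and `(J - a)² ≤ J - a ≤ J` as `0 ≤ J - a < 1`
  nlinarith [mul_nonneg (sub_nonneg.2 hJ₁) (sub_nonneg.2 hJ₂.le), mul_pos ht ht]

theorem ellipsoid_entropy_lower_bound_general
    (γ : ℝ) (hγ : 1 < γ) (ε : ℝ) (hε0 : 0 < ε) (hε1 : ε ≤ 1)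
    (B₀ : Set (lp (fun _ : ℕ => ℝ) 2))
    (hB₀ : B₀ = {x : lp (fun _ : ℕ => ℝ) 2 |
      ∑' m : ℕ, ENNReal.ofReal ((γ ^ m * x m) ^ 2) ≤ 1})
    (s : Finset (lp (fun _ : ℕ => ℝ) 2))
    (hcover : B₀ ⊆ ⋃ y ∈ s, Metric.closedBall y ε) :
    (Real.log (1 / ε)) ^ 2 / (2 * Real.log γ) ≤ Real.log s.card := by
  have hB : B₀ = lpEllipsoid (γ ^ ·) := hB₀
  have hγ0 : 0 < γ := zero_lt_one.trans hγ
  set L := Real.log (1 / ε)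
  set J := ⌈L / Real.log γ⌉₊
  calc L ^ 2 / (2 * Real.log γ) ≤ ∑ m ∈ range J, (L - m * Real.log γ) :=
        sq_div_two_mul_le_sum_range_ceil (Real.log_nonneg (one_le_one_div hε0 hε1))
          (Real.log_pos hγ)
    _ = ∑ m ∈ range J, Real.log (1 / (γ ^ m * ε)) := sum_congr rfl fun m _ => by
        rw [mul_comm (γ ^ m), ← div_div, Real.log_div (x := 1 / ε) (by positivity) (by positivity),
          Real.log_pow]
    _ ≤ Real.log s.card :=
        sum_log_le_log_card_of_lpEllipsoid_subset hε0 (hB ▸ hcover) _ fun m _ => pow_pos hγ0 m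

/-- metric entropy lower bound for an exponential ellipsoid in ℓ²:
let `B₀ = {x ∈ ℓ² : ∑_{m≥0} (γ^m x_m)² ≤ 1}` (semi-axes `τ_m = γ^{−m}`, i.e.
`γ^{−(m−1)}` when indexing from `m = 1`) with `γ > 1`.  Then any covering of `B₀`
by `N` closed balls of radius `ε ∈ (0,1]` with centers in `B₀` satisfies
`log N ≥ (log(1/ε))² / (2 log γ)`. -/
theorem ellipsoid_entropy_lower_bound
    (γ : ℝ) (hγ : 1 < γ) (ε : ℝ) (hε0 : 0 < ε) (hε1 : ε ≤ 1)
    (B₀ : Set (lp (fun _ : ℕ => ℝ) 2))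
    (hB₀ : B₀ = {x : lp (fun _ : ℕ => ℝ) 2 |
      ∑' m : ℕ, ENNReal.ofReal ((γ ^ m * x m) ^ 2) ≤ 1})
    (s : Finset (lp (fun _ : ℕ => ℝ) 2)) (hs : ↑s ⊆ B₀)
    (hcover : B₀ ⊆ ⋃ y ∈ s, Metric.closedBall y ε) :
    (Real.log (1 / ε)) ^ 2 / (2 * Real.log γ) ≤ Real.log s.card :=
  ellipsoid_entropy_lower_bound_general γ hγ ε hε0 hε1 B₀ hB₀ s hcover
end
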